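/- Let t be a finite rooted tree in which every node has at most two children. Then dim(t) = height(t) if and only if t is a perfect binary tree (i.e., t equals B(height(t)), where B(0) is a leaf and B(h+1) is a node with two children B(h), B(h)). In particular, if such a tree t is not a perfect binary tree, then dim(t) < height(t). -/

import Mathlib

/-- A finite rooted tree with labels in `β` and an ordered list of subtrees. -/
inductive RTree (β : Type) where
  | node (label : β) (children : List (RTree β))

/-- The tree dimension: `0` for a leaf; otherwise the maximum of the children's
dimensions if it is attained by a unique child, and that maximum plus one otherwise. -/
def RTree.dim {β : Type} : RTree β → ℕ
  | .node _ ts =>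
    let ds := ts.attach.map fun t => RTree.dim t.1
    if ds = [] then 0
    else if ds.count (ds.foldr max 0) = 1 then ds.foldr max 0
    else ds.foldr max 0 + 1
decreasing_by
  have := List.sizeOf_lt_of_mem t.2
  simp only [RTree.node.sizeOf_spec]
  omega

/-- The height of a tree: `0` for a leaf, otherwise one plus the maximum child height. -/
def RTree.height {β : Type} : RTree β → ℕ
  | .node _ ts =>
    let hs := ts.attach.map fun t => RTree.height t.1
    if hs = [] then 0 else hs.foldr max 0 + 1
decreasing_by
  have := List.sizeOf_lt_of_mem t.2
  simp only [RTree.node.sizeOf_spec]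
  omega

/-- The perfect binary tree of height `h`: `B(0)` is a leaf and `B(h+1)` is a node
whose two children are copies of `B(h)`. -/
def perfectBinary : ℕ → RTree Unit
  | 0 => .node () []
  | h + 1 => .node () [perfectBinary h, perfectBinary h]

/-- A tree in which every node has at most two children. -/
inductive RTree.AtMostTwo {β : Type} : RTree β → Prop
  | node (l : β) (ts : List (RTree β)) :
      ts.length ≤ 2 → (∀ t ∈ ts, RTree.AtMostTwo t) → RTree.AtMostTwo (.node l ts)

/-!
Every node adds at most one to the largest dimension among its children, and exactly one to
the largest height, so `dim t ≤ height t` for every tree. At a node with at most two children,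
equality forces exactly two children, of equal height and each with dimension equal to its
height; by induction both are then the perfect tree of that height.
-/

namespace RTree

variable {β : Type}

@[simp] theorem dim_node_nil (l : β) : (node l []).dim = 0 := by
  simp [RTree.dim]

@[simp] theorem dim_node_singleton (l : β) (a : RTree β) : (node l [a]).dim = a.dim := by
  simp [RTree.dim]

theorem dim_node_pair (l : β) (a b : RTree β) :
    (node l [a, b]).dim = if a.dim = b.dim then a.dim + 1 else max a.dim b.dim := by
  simp only [RTree.dim, List.attach_cons, List.attach_nil, List.map_cons, List.map_nil,
    List.count_cons, List.count_nil, List.foldr, reduceCtorEq, if_false, beq_iff_eq]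
  split_ifs <;> omega

@[simp] theorem height_node_nil (l : β) : (node l []).height = 0 := by
  simp [RTree.height]

@[simp] theorem height_node_singleton (l : β) (a : RTree β) :
    (node l [a]).height = a.height + 1 := by
  simp [RTree.height]

@[simp] theorem height_node_pair (l : β) (a b : RTree β) :
    (node l [a, b]).height = max a.height b.height + 1 := by
  simp [RTree.height]

theorem dim_le_height : ∀ t : RTree β, t.dim ≤ t.height
  | node _ ts => by
    have hmax : (ts.attach.map fun t => t.1.dim).foldr max 0 ≤
        (ts.attach.map fun t => t.1.height).foldr max 0 :=
      List.max_le_of_forall_le _ _ fun _ hd => by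
        obtain ⟨t, ht, rfl⟩ := List.mem_map.1 hd
        exact List.le_max_of_le (List.mem_map_of_mem ht) (dim_le_height t.1)
    rw [RTree.dim, RTree.height]
    simp only [List.map_eq_nil_iff, List.attach_eq_nil_iff]
    split_ifs <;> omega
decreasing_by
  have := List.sizeOf_lt_of_mem t.2
  simp only [RTree.node.sizeOf_spec]
  omega

theorem AtMostTwo.eq_perfectBinary_of_dim_eq_height {t : RTree Unit} (ht : t.AtMostTwo)
    (h : t.dim = t.height) : t = perfectBinary t.height := by
  induction ht with
  | node _ ts hlen _ ih =>
    rcases ts with _ | ⟨a, _ | ⟨b, _ | ⟨_, _⟩⟩⟩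
    · rw [height_node_nil]
      rfl
    · have := a.dim_le_height
      simp only [dim_node_singleton, height_node_singleton] at h
      omega
    · have ha := a.dim_le_height
      have hb := b.dim_le_height
      rw [dim_node_pair, height_node_pair] at h
      split_ifs at h
      · have hpa : a = perfectBinary a.height := ih a (by simp) (by omega)
        have hpb : b = perfectBinary b.height := ih b (by simp) (by omega)
        have hab : b.height = a.height := by omega
        rw [height_node_pair, hab, max_self, perfectBinary]
        conv_lhs => rw [hpa, hpb, hab]
      · omega
    · simp at hlen

end RTree

theorem height_perfectBinary (h : ℕ) : (perfectBinary h).height = h := by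
  induction h with
  | zero => exact RTree.height_node_nil ()
  | succ n ih => rw [perfectBinary, RTree.height_node_pair, ih, max_self]

theorem dim_perfectBinary (h : ℕ) : (perfectBinary h).dim = h := by
  induction h with
  | zero => exact RTree.dim_node_nil ()
  | succ n ih => rw [perfectBinary, RTree.dim_node_pair, if_pos rfl, ih]

/-- for a tree whose nodes have at most two children,
`dim t = height t` iff `t` is the perfect binary tree of its height;
in particular, if `t` is not perfect then `dim t < height t`. -/
theorem dim_eq_height_iff_perfect (t : RTree Unit) (ht : t.AtMostTwo) :
    (t.dim = t.height ↔ t = perfectBinary t.height) ∧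
    (t ≠ perfectBinary t.height → t.dim < t.height) := by
  have iff : t.dim = t.height ↔ t = perfectBinary t.height :=
    ⟨ht.eq_perfectBinary_of_dim_eq_height, fun h => by
      rw [h, dim_perfectBinary, height_perfectBinary]⟩
  exact ⟨iff, fun hne => t.dim_le_height.lt_of_ne (mt iff.1 hne)⟩
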